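/- arXiv:0709.4643 — 2 statements merged into one kernel-verified Lean document; each statement's English description precedes it below -/
import Mathlib

section
/- Assume condition (A₀). Then there exists γ₀ > 0 such that the system ẋ = ψ(x) has no T₀-periodic solution x whose initial value ξ = x(0) satisfies 0 < dist(ξ, x̃₀) < γ₀. (isolation of the limit cycle; existence of the constant γ₀ of Definition 1) -/
/-!
Suppose `T₀`-periodic solutions `X n` start at distances `δ n → 0`, `δ n > 0`, from the cycle.
After a time shift, `X n (s n)` is nearest to `x₀ (s n)` on the cycle, so `X n (s n) - x₀ (s n)`
is orthogonal to `ψ (x₀ (s n))`. Grönwall's inequality keeps `X n` within `O(δ n)` of `x₀` over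
one period, hence for all times, and by Taylor's formula the rescaled differences
`(δ n)⁻¹ • (X n - x₀)` are `T₀`-periodic approximate solutions of the variational equation with
defect `O(δ n)`. Grönwall's inequality for the linear equation makes a subsequence converge
uniformly to a `T₀`-periodic solution `y` of the variational equation with `‖y s‖ = 1` and
`y s ⟂ ψ (x₀ s)` for some `s`; so `y` and `ẋ₀ = ψ ∘ x₀` are linearly independent, against (A₀).
-/

open Set Metric Function Filter Real
open scoped NNReal Topology InnerProductSpace

theorem Function.Periodic.forall_of_forall_mem_Icc {α : Type*} {f : ℝ → α} {T : ℝ}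
    (hf : Periodic f T) (hT : 0 < T) {p : α → Prop} (a : ℝ)
    (h : ∀ t ∈ Icc a (a + T), p (f t)) (t : ℝ) : p (f t) := by
  obtain ⟨u, hu, hfu⟩ := hf.exists_mem_Ico hT t a
  exact hfu ▸ h u (Ico_subset_Icc_self hu)

theorem Function.Periodic.of_tendsto {α : Type*} [TopologicalSpace α] [T2Space α]
    {ι : Type*} {l : Filter ι} [l.NeBot] {F : ι → ℝ → α} {f : ℝ → α} {T : ℝ}
    (hF : ∀ i, Periodic (F i) T) (hFf : ∀ t, Tendsto (fun i => F i t) l (𝓝 (f t))) :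
    Periodic f T := fun t =>
  tendsto_nhds_unique (by simpa only [hF _ t] using hFf (t + T)) (hFf t)

theorem continuous_gronwallBound (K x : ℝ) :
    Continuous fun p : ℝ × ℝ => gronwallBound p.1 K p.2 x := by
  by_cases hK : K = 0
  · simp only [gronwallBound_K0, hK]
    fun_prop
  · simp only [gronwallBound_of_K_ne_0 hK]
    fun_prop

section NormedSpace

variable {E : Type*} [NormedAddCommGroup E] [NormedSpace ℝ E]

theorem ne_zero_of_hasDerivAt_of_forall_period_le {x x' : ℝ → E} {T : ℝ} (hT : 0 < T)
    (hx : ∀ t, HasDerivAt x (x' t) t)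
    (hleast : ∀ p, 0 < p → Periodic x p → T ≤ p) : x' ≠ 0 := by
  intro hx'
  have hconst := is_const_of_deriv_eq_zero (fun t => (hx t).differentiableAt)
    fun t => by simp [(hx t).deriv, hx']
  linarith [hleast (T / 2) (half_pos hT) fun t => hconst _ _]

theorem Function.Periodic.exists_forall_lipschitzWith {F : Type*} [NormedAddCommGroup F]
    [NormedSpace ℝ F] {A : ℝ → E →L[ℝ] F} {T : ℝ}
    (hA : Continuous A) (hper : Periodic A T) (hT : 0 < T) : ∃ K, ∀ t, LipschitzWith K (A t) := by
  obtain ⟨C, hC⟩ := (hper.compact_of_continuous hT.ne' hA).isBounded.exists_norm_le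
  exact ⟨C.toNNReal, fun t => ContinuousLinearMap.lipschitzWith_of_opNorm_le
    ((hC _ (mem_range_self t)).trans (le_coe_toNNReal C))⟩

theorem Convex.norm_image_sub_sub_fderiv_le {F : Type*} [NormedAddCommGroup F]
    [NormedSpace ℝ F] {f : E → F} {s : Set E} (hs : Convex ℝ s)
    (hf : ∀ x ∈ s, DifferentiableAt ℝ f x) {L : ℝ≥0} (hL : LipschitzOnWith L (fderiv ℝ f) s)
    {a b : E} (ha : a ∈ s) (hb : b ∈ s) :
    ‖f b - f a - fderiv ℝ f a (b - a)‖ ≤ L * ‖b - a‖ ^ 2 := by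
  have hbound : ∀ x ∈ s ∩ closedBall a ‖b - a‖, ‖fderiv ℝ f x - fderiv ℝ f a‖ ≤ L * ‖b - a‖ :=
    fun x hx => by
      rw [← dist_eq_norm]
      exact (hL.dist_le_mul x hx.1 a ha).trans (by gcongr; exact hx.2)
  have := (hs.inter (convex_closedBall a _)).norm_image_sub_le_of_norm_fderiv_le'
    (fun x hx => hf x hx.1) hbound ⟨ha, mem_closedBall_self (norm_nonneg _)⟩
    ⟨hb, by rw [mem_closedBall, dist_eq_norm]⟩
  linarith

theorem dist_le_of_trajectories_of_closedBall_subset {v : E → E} {K : ℝ≥0} {s : Set E}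
    (hv : LipschitzOnWith K v s) {f g : ℝ → E} (hf : ∀ t, HasDerivAt f (v (f t)) t)
    (hg : ∀ t, HasDerivAt g (v (g t)) t) {a b r : ℝ}
    (hgs : ∀ t ∈ Icc a b, closedBall (g t) r ⊆ s)
    (hab : dist (f a) (g a) * exp (K * (b - a)) < r) :
    ∀ t ∈ Icc a b, dist (f t) (g t) ≤ dist (f a) (g a) * exp (K * (b - a)) := by
  have hfc : Continuous f := continuous_iff_continuousAt.2 fun t => (hf t).continuousAt
  have hgc : Continuous g := continuous_iff_continuousAt.2 fun t => (hg t).continuousAt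
  have hgronwall : ∀ t ∈ Icc a b, (∀ τ ∈ Ico a t, dist (f τ) (g τ) ≤ r) →
      dist (f t) (g t) ≤ dist (f a) (g a) * exp (K * (b - a)) := by
    intro t ht hclose
    refine (dist_le_of_trajectories_ODE_of_mem (v := fun _ => v) (s := fun _ => s)
      (fun _ _ => hv) hfc.continuousOn (fun τ _ => (hf τ).hasDerivWithinAt)
      (fun τ hτ => hgs τ ⟨hτ.1, hτ.2.le.trans ht.2⟩ (mem_closedBall.2 (hclose τ hτ)))
      hgc.continuousOn (fun τ _ => (hg τ).hasDerivWithinAt)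
      (fun τ hτ => hgs τ ⟨hτ.1, hτ.2.le.trans ht.2⟩ (mem_closedBall_self ?_)) le_rfl t
      ⟨ht.1, le_rfl⟩).trans (by gcongr; linarith [ht.2])
    exact dist_nonneg.trans (hclose τ hτ)
  have hnear : ∀ t ∈ Icc a b, dist (f t) (g t) < r := by
    -- at the first time the distance reaches `r`, `hgronwall` bounds it strictly below `r`
    by_contra! hfar
    obtain ⟨t₁, ht₁, hr₁⟩ := hfar
    set S := Icc a b ∩ {t | r ≤ dist (f t) (g t)}
    have hS : IsCompact S :=
      isCompact_Icc.inter_right (isClosed_le continuous_const (hfc.dist hgc))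
    have hfirst : sInf S ∈ S := hS.sInf_mem ⟨t₁, ht₁, hr₁⟩
    refine (hgronwall _ hfirst.1 fun τ hτ => ?_).not_gt (hab.trans_le hfirst.2)
    by_contra! hτr
    exact (csInf_le hS.bddBelow ⟨⟨hτ.1, hτ.2.le.trans hfirst.1.2⟩, hτr.le⟩).not_gt hτ.2
  exact fun t ht => hgronwall t ht fun τ hτ => (hnear τ ⟨hτ.1, hτ.2.le.trans ht.2⟩).le

section ApproximateSolutions

variable {v : ℝ → E → E} {K : ℝ≥0}

theorem dist_le_gronwallBound_of_periodic_approx (hv : ∀ t, LipschitzWith K (v t)) {T : ℝ}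
    (hT : 0 < T) {f g f' g' : ℝ → E} {εf εg : ℝ} (hf : ∀ t, HasDerivAt f (f' t) t)
    (hg : ∀ t, HasDerivAt g (g' t) t) (hfper : Periodic f T) (hgper : Periodic g T)
    (hf' : ∀ t, dist (f' t) (v t (f t)) ≤ εf) (hg' : ∀ t, dist (g' t) (v t (g t)) ≤ εg)
    (t : ℝ) : dist (f t) (g t) ≤ gronwallBound (dist (f 0) (g 0)) K (εf + εg) T := by
  have hper : Periodic (fun t => dist (f t) (g t)) T := fun t => by
    simp only [hfper t, hgper t]
  refine hper.forall_of_forall_mem_Icc hT (p := (· ≤ _)) 0 (fun τ hτ => ?_) t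
  rw [zero_add] at hτ
  refine (dist_le_of_approx_trajectories_ODE hv
    (continuous_iff_continuousAt.2 fun t => (hf t).continuousAt).continuousOn
    (fun t _ => (hf t).hasDerivWithinAt) (fun t _ => hf' t)
    (continuous_iff_continuousAt.2 fun t => (hg t).continuousAt).continuousOn
    (fun t _ => (hg t).hasDerivWithinAt) (fun t _ => hg' t) le_rfl τ hτ).trans ?_
  exact gronwallBound_mono dist_nonneg
    (add_nonneg (dist_nonneg.trans (hf' 0)) (dist_nonneg.trans (hg' 0))) K.2 (by linarith [hτ.2])

theorem uniformCauchySeqOn_of_periodic_approx (hv : ∀ t, LipschitzWith K (v t)) {T : ℝ}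
    (hT : 0 < T) {Z D : ℕ → ℝ → E} {η : ℕ → ℝ} (hZ : ∀ k t, HasDerivAt (Z k) (D k t) t)
    (hper : ∀ k, Periodic (Z k) T)
    (hD : ∀ᶠ k in atTop, ∀ t, dist (D k t) (v t (Z k t)) ≤ η k) (hη : Tendsto η atTop (𝓝 0))
    (h0 : CauchySeq fun k => Z k 0) : UniformCauchySeqOn Z atTop univ := by
  have hbound : Tendsto (fun p : ℕ × ℕ => gronwallBound (dist (Z p.1 0) (Z p.2 0)) K
      (η p.1 + η p.2) T) (atTop ×ˢ atTop) (𝓝 0) := by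
    have hdist := cauchySeq_iff_tendsto_dist_atTop_0.1 h0
    rw [← prod_atTop_atTop_eq] at hdist
    have h := ((continuous_gronwallBound K T).tendsto (0, 0)).comp
      (hdist.prodMk_nhds
        (by simpa using (hη.comp tendsto_fst).add (hη.comp tendsto_snd)))
    rwa [gronwallBound_ε0_δ0] at h
  intro u hu
  obtain ⟨ε, hε, hεu⟩ := mem_uniformity_dist.1 hu
  filter_upwards [hbound.eventually_lt_const hε, hD.prod_mk hD] with p hp hpD t _
  exact hεu ((dist_le_gronwallBound_of_periodic_approx hv hT (hZ p.1) (hZ p.2) (hper p.1)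
    (hper p.2) hpD.1 hpD.2 t).trans_lt hp)

theorem TendstoUniformly.hasDerivAt_of_approx (hv : ∀ t, LipschitzWith K (v t))
    {Z D : ℕ → ℝ → E} {y : ℝ → E} {η : ℕ → ℝ}
    (hZy : TendstoUniformly Z y atTop) (hZ : ∀ k t, HasDerivAt (Z k) (D k t) t)
    (hD : ∀ᶠ k in atTop, ∀ t, dist (D k t) (v t (Z k t)) ≤ η k) (hη : Tendsto η atTop (𝓝 0))
    (t : ℝ) : HasDerivAt y (v t (y t)) t := by
  refine hasDerivAt_of_tendstoUniformly (g' := fun t => v t (y t)) ?_ (Eventually.of_forall hZ)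
    hZy.tendsto_at t
  rw [Metric.tendstoUniformly_iff]
  intro ε hε
  have hδ : 0 < ε / 2 / (K + 1) := by positivity
  have hKδ : K * (ε / 2 / (K + 1)) ≤ ε / 2 := by
    rw [mul_div_assoc', div_le_iff₀ (by positivity)]
    nlinarith [K.2]
  filter_upwards [Metric.tendstoUniformly_iff.1 hZy _ hδ, hη.eventually_lt_const (half_pos hε),
    hD] with k hZk hηk hDk t
  calc dist (v t (y t)) (D k t)
      ≤ dist (v t (y t)) (v t (Z k t)) + dist (D k t) (v t (Z k t)) := dist_triangle_right ..
    _ ≤ K * (ε / 2 / (K + 1)) + η k :=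
        add_le_add (((hv t).dist_le_mul _ _).trans (by gcongr; exact (hZk t).le)) (hDk t)
    _ < ε := by linarith

theorem exists_tendstoUniformly_of_periodic_approx [CompleteSpace E]
    (hv : ∀ t, LipschitzWith K (v t)) {T : ℝ} (hT : 0 < T)
    {Z D : ℕ → ℝ → E} {η : ℕ → ℝ} (hZ : ∀ k t, HasDerivAt (Z k) (D k t) t)
    (hper : ∀ k, Periodic (Z k) T)
    (hD : ∀ᶠ k in atTop, ∀ t, dist (D k t) (v t (Z k t)) ≤ η k) (hη : Tendsto η atTop (𝓝 0))
    (h0 : CauchySeq fun k => Z k 0) :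
    ∃ y, TendstoUniformly Z y atTop ∧ Periodic y T ∧ ∀ t, HasDerivAt y (v t (y t)) t := by
  have hcauchy := uniformCauchySeqOn_of_periodic_approx hv hT hZ hper hD hη h0
  have hlim (t : ℝ) : Tendsto (fun k => Z k t) atTop (𝓝 (limUnder atTop fun k => Z k t)) :=
    (hcauchy.cauchySeq (mem_univ t)).tendsto_limUnder
  have hunif := tendstoUniformlyOn_univ.1 (hcauchy.tendstoUniformlyOn_of_tendsto fun t _ => hlim t)
  exact ⟨_, hunif, Periodic.of_tendsto hper hlim, hunif.hasDerivAt_of_approx hv hZ hD hη⟩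

end ApproximateSolutions

section PeriodicSolutions

variable [ProperSpace E] {ψ : E → E} {T : ℝ} {x₀ : ℝ → E}

theorem exists_dist_le_mul_of_periodic_solution (hψ : ContDiff ℝ 1 ψ) (hT : 0 < T)
    (hx₀ : ∀ t, HasDerivAt x₀ (ψ (x₀ t)) t) (hx₀per : Periodic x₀ T) :
    ∃ C r : ℝ, 0 < C ∧ 0 < r ∧ ∀ Y : ℝ → E, (∀ t, HasDerivAt Y (ψ (Y t)) t) →
      Periodic Y T → ∀ s, dist (Y s) (x₀ s) < r →
        ∀ t, dist (Y t) (x₀ t) ≤ C * dist (Y s) (x₀ s) := by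
  have hx₀c : Continuous x₀ := continuous_iff_continuousAt.2 fun t => (hx₀ t).continuousAt
  obtain ⟨L, hL⟩ := hψ.locallyLipschitz.locallyLipschitzOn.exists_lipschitzOnWith_of_compact
    ((hx₀per.compact_of_continuous hT.ne' hx₀c).cthickening (r := 1))
  refine ⟨exp (L * T), exp (-(L * T)), exp_pos _, exp_pos _, fun Y hY hYper s hs t => ?_⟩
  have hper : Periodic (fun t => dist (Y t) (x₀ t)) T := fun t => by
    simp only [hYper t, hx₀per t]
  refine hper.forall_of_forall_mem_Icc hT (p := (· ≤ _)) s (fun τ hτ => ?_) t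
  have hgronwall := dist_le_of_trajectories_of_closedBall_subset hL hY hx₀
    (fun t _ => closedBall_subset_cthickening (mem_range_self t) 1) ?_ τ hτ
  · rwa [add_sub_cancel_left, mul_comm] at hgronwall
  · rwa [add_sub_cancel_left, ← lt_mul_inv_iff₀ (exp_pos _), ← exp_neg, one_mul]

theorem exists_norm_linearization_sub_le (hψ : ContDiff ℝ 2 ψ) (hT : 0 < T)
    (hx₀ : ∀ t, HasDerivAt x₀ (ψ (x₀ t)) t) (hx₀per : Periodic x₀ T) :
    ∃ C M r : ℝ, 0 < r ∧ ∀ Y : ℝ → E, (∀ t, HasDerivAt Y (ψ (Y t)) t) → Periodic Y T →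
      ∀ s, dist (Y s) (x₀ s) < r → ∀ t, ‖Y t - x₀ t‖ ≤ C * dist (Y s) (x₀ s) ∧
        ‖ψ (Y t) - ψ (x₀ t) - fderiv ℝ ψ (x₀ t) (Y t - x₀ t)‖ ≤ M * dist (Y s) (x₀ s) ^ 2 := by
  obtain ⟨C, r, hC, hr, hclose⟩ :=
    exists_dist_le_mul_of_periodic_solution (hψ.of_le (by norm_num)) hT hx₀ hx₀per
  have hx₀c : Continuous x₀ := continuous_iff_continuousAt.2 fun t => (hx₀ t).continuousAt
  obtain ⟨L, hL⟩ := (hψ.fderiv_right (m := 1) (by norm_num)).locallyLipschitz.locallyLipschitzOn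
    |>.exists_lipschitzOnWith_of_compact
      ((hx₀per.compact_of_continuous hT.ne' hx₀c).cthickening (r := C * r))
  refine ⟨C, L * C ^ 2, r, hr, fun Y hY hYper s hs t => ?_⟩
  have hYt : dist (Y t) (x₀ t) ≤ C * dist (Y s) (x₀ s) := hclose Y hY hYper s hs t
  have hball := closedBall_subset_cthickening (mem_range_self (f := x₀) t) (C * r)
  refine ⟨by rwa [← dist_eq_norm], ?_⟩
  calc ‖ψ (Y t) - ψ (x₀ t) - fderiv ℝ ψ (x₀ t) (Y t - x₀ t)‖
      ≤ L * ‖Y t - x₀ t‖ ^ 2 :=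
        (convex_closedBall _ _).norm_image_sub_sub_fderiv_le
          (fun x _ => (hψ.differentiable (by norm_num)).differentiableAt) (hL.mono hball)
          (mem_closedBall_self (by positivity))
          (mem_closedBall.2 (hYt.trans (by gcongr)))
    _ ≤ L * (C * dist (Y s) (x₀ s)) ^ 2 := by rw [← dist_eq_norm]; gcongr
    _ = L * C ^ 2 * dist (Y s) (x₀ s) ^ 2 := by ring

theorem exists_eventually_rescaled_linearization_le (hψ : ContDiff ℝ 2 ψ) (hT : 0 < T)
    (hx₀ : ∀ t, HasDerivAt x₀ (ψ (x₀ t)) t) (hx₀per : Periodic x₀ T)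
    {Y : ℕ → ℝ → E} (hY : ∀ n t, HasDerivAt (Y n) (ψ (Y n t)) t) (hYper : ∀ n, Periodic (Y n) T)
    {s δ : ℕ → ℝ} (hδ : ∀ n, dist (Y n (s n)) (x₀ (s n)) = δ n)
    (hpos : ∀ n, 0 < δ n) (hlim : Tendsto δ atTop (𝓝 0)) :
    ∃ C M : ℝ, ∀ᶠ n in atTop, ∀ t, ‖(δ n)⁻¹ • (Y n t - x₀ t)‖ ≤ C ∧
      dist ((δ n)⁻¹ • (ψ (Y n t) - ψ (x₀ t))) (fderiv ℝ ψ (x₀ t) ((δ n)⁻¹ • (Y n t - x₀ t)))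
        ≤ M * δ n := by
  obtain ⟨C, M, r, hr, hlin⟩ := exists_norm_linearization_sub_le hψ hT hx₀ hx₀per
  refine ⟨C, M, ?_⟩
  filter_upwards [hlim.eventually_lt_const hr] with n hn t
  obtain ⟨hdev, hquad⟩ := hlin (Y n) (hY n) (hYper n) (s n) (hδ n ▸ hn) t
  rw [hδ] at hdev hquad
  simp only [dist_eq_norm, map_smul, ← smul_sub, norm_smul, norm_inv,
    norm_of_nonneg (hpos n).le, inv_mul_le_iff₀ (hpos n)]
  exact ⟨by linarith, by linarith⟩

end PeriodicSolutions

end NormedSpace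

section InnerProductSpace

variable {E : Type*} [NormedAddCommGroup E] [InnerProductSpace ℝ E]

theorem linearIndependent_pair_of_inner_eq_zero {α : Type*} {y u : α → E} (s : α)
    (hu : u ≠ 0) (hy : y s ≠ 0) (h : ⟪y s, u s⟫_ℝ = 0) : LinearIndependent ℝ ![y, u] := by
  rw [linearIndependent_fin2]
  refine ⟨hu, fun a hay => hy ?_⟩
  have hys : y s = a • u s := (congrFun hay s).symm
  rw [← inner_self_eq_zero (𝕜 := ℝ)]
  nth_rw 1 [hys]
  rw [real_inner_smul_left, real_inner_comm, h, mul_zero]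

theorem inner_sub_eq_zero_of_forall_dist_le {γ : ℝ → E} {γ' ξ : E} {s : ℝ}
    (hγ : HasDerivAt γ γ' s) (hmin : ∀ t, dist ξ (γ s) ≤ dist ξ (γ t)) :
    ⟪ξ - γ s, γ'⟫_ℝ = 0 := by
  have hderiv : HasDerivAt (fun t => ⟪ξ - γ t, ξ - γ t⟫_ℝ) (-(2 * ⟪ξ - γ s, γ'⟫_ℝ)) s := by
    refine ((hγ.const_sub ξ).inner ℝ (hγ.const_sub ξ)).congr_deriv ?_
    rw [inner_neg_left, inner_neg_right, real_inner_comm]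
    ring
  have hlocalMin : IsLocalMin (fun t => ⟪ξ - γ t, ξ - γ t⟫_ℝ) s :=
    Eventually.of_forall fun t => by
      simp only [real_inner_self_eq_norm_sq, ← dist_eq_norm]
      exact pow_le_pow_left₀ dist_nonneg (hmin t) 2
  linarith [hlocalMin.hasDerivAt_eq_zero hderiv]

theorem Function.Periodic.exists_inner_sub_eq_zero_of_infDist_eq {γ γ' : ℝ → E} {T : ℝ}
    (hγ : ∀ t, HasDerivAt γ (γ' t) t) (hper : Periodic γ T) (hT : 0 < T) (ξ : E) :
    ∃ s ∈ Icc 0 T, dist ξ (γ s) = infDist ξ (γ '' Icc 0 T) ∧ ⟪ξ - γ s, γ' s⟫_ℝ = 0 := by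
  have hcont : Continuous γ := continuous_iff_continuousAt.2 fun t => (hγ t).continuousAt
  obtain ⟨_, ⟨s, hs, rfl⟩, hξs⟩ := (isCompact_Icc.image hcont).exists_infDist_eq_dist
    ((nonempty_Icc.2 hT.le).image γ) ξ
  refine ⟨s, hs, hξs.symm, inner_sub_eq_zero_of_forall_dist_le (hγ s) fun t => ?_⟩
  rw [← hξs]
  refine infDist_le_dist_of_mem ?_
  rw [← zero_add T, hper.image_Icc hT]
  exact mem_range_self t

section PeriodicSolutions

variable [ProperSpace E] {ψ : E → E} {T : ℝ} {x₀ : ℝ → E}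

theorem exists_periodic_variational_solution_of_tendsto (hψ : ContDiff ℝ 2 ψ) (hT : 0 < T)
    (hx₀ : ∀ t, HasDerivAt x₀ (ψ (x₀ t)) t) (hx₀per : Periodic x₀ T)
    {Y : ℕ → ℝ → E} (hY : ∀ n t, HasDerivAt (Y n) (ψ (Y n t)) t) (hYper : ∀ n, Periodic (Y n) T)
    {s δ : ℕ → ℝ} (hs : ∀ n, s n ∈ Icc 0 T) (hδ : ∀ n, dist (Y n (s n)) (x₀ (s n)) = δ n)
    (hpos : ∀ n, 0 < δ n) (hlim : Tendsto δ atTop (𝓝 0))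
    (horth : ∀ n, ⟪Y n (s n) - x₀ (s n), ψ (x₀ (s n))⟫_ℝ = 0) :
    ∃ y : ℝ → E, (∀ t, HasDerivAt y (fderiv ℝ ψ (x₀ t) (y t)) t) ∧ Periodic y T ∧
      ∃ s, ‖y s‖ = 1 ∧ ⟪y s, ψ (x₀ s)⟫_ℝ = 0 := by
  set z : ℕ → ℝ → E := fun n t => (δ n)⁻¹ • (Y n t - x₀ t)
  have hz (n : ℕ) (t : ℝ) : HasDerivAt (z n) ((δ n)⁻¹ • (ψ (Y n t) - ψ (x₀ t))) t :=
    ((hY n t).sub (hx₀ t)).const_smul _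
  have hzs (n : ℕ) : ‖z n (s n)‖ = 1 := by
    rw [norm_smul, norm_inv, ← dist_eq_norm, hδ, norm_of_nonneg (hpos n).le,
      inv_mul_cancel₀ (hpos n).ne']
  obtain ⟨C, M, happrox⟩ :=
    exists_eventually_rescaled_linearization_le hψ hT hx₀ hx₀per hY hYper hδ hpos hlim
  have hx₀c : Continuous x₀ := continuous_iff_continuousAt.2 fun t => (hx₀ t).continuousAt
  obtain ⟨K, hK⟩ := Periodic.exists_forall_lipschitzWith
    ((hψ.continuous_fderiv (by norm_num)).comp hx₀c) (hx₀per.comp _) hT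
  obtain ⟨⟨s', _⟩, -, φ, hφ, hφlim⟩ :=
    (isCompact_Icc.prod (isCompact_closedBall (0 : E) C)).tendsto_subseq'
      (x := fun n => (s n, z n 0))
      (happrox.mono fun n hn => ⟨hs n, mem_closedBall_zero_iff.2 (hn 0).1⟩).frequently
  have hsφ : Tendsto (fun k => s (φ k)) atTop (𝓝 s') := (continuous_fst.tendsto _).comp hφlim
  obtain ⟨y, hunif, hyper, hy⟩ := exists_tendstoUniformly_of_periodic_approx hK hT
    (fun k => hz (φ k)) (fun k => ((hYper (φ k)).sub hx₀per).smul _)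
    ((hφ.tendsto_atTop.eventually happrox).mono fun k hk t => (hk t).2)
    (by simpa using (hlim.comp hφ.tendsto_atTop).const_mul M)
    ((continuous_snd.tendsto _).comp hφlim).cauchySeq
  have hys : Tendsto (fun k => z (φ k) (s (φ k))) atTop (𝓝 (y s')) :=
    hunif.tendsto_comp (hy s').continuousAt hsφ
  refine ⟨y, hy, hyper, s', tendsto_nhds_unique hys.norm (by simp [hzs]),
    tendsto_nhds_unique (hys.inner (((hψ.continuous.comp hx₀c).tendsto s').comp hsφ)) ?_⟩
  simp [z, real_inner_smul_left, horth]

theorem exists_periodic_variational_solution (hψ : ContDiff ℝ 2 ψ) (hT : 0 < T)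
    (hx₀ : ∀ t, HasDerivAt x₀ (ψ (x₀ t)) t) (hx₀per : Periodic x₀ T)
    {X : ℕ → ℝ → E} (hX : ∀ n t, HasDerivAt (X n) (ψ (X n t)) t) (hXper : ∀ n, Periodic (X n) T)
    (hpos : ∀ n, 0 < infDist (X n 0) (x₀ '' Icc 0 T))
    (hlim : Tendsto (fun n => infDist (X n 0) (x₀ '' Icc 0 T)) atTop (𝓝 0)) :
    ∃ y : ℝ → E, (∀ t, HasDerivAt y (fderiv ℝ ψ (x₀ t) (y t)) t) ∧ Periodic y T ∧
      ∃ s, y s ≠ 0 ∧ ⟪y s, ψ (x₀ s)⟫_ℝ = 0 := by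
  choose s hs hdist horth using
    fun n => hx₀per.exists_inner_sub_eq_zero_of_infDist_eq hx₀ hT (X n 0)
  obtain ⟨y, hy, hyper, s', hys, hyorth⟩ := exists_periodic_variational_solution_of_tendsto hψ hT
    hx₀ hx₀per (Y := fun n t => X n (t - s n)) (fun n t => (hX n (t - s n)).comp_sub_const t _)
    (fun n => (hXper n).sub_const _) hs (by simpa using hdist) hpos hlim (by simpa using horth)
  exact ⟨y, hy, hyper, s', norm_ne_zero_iff.1 (hys ▸ one_ne_zero), hyorth⟩

end PeriodicSolutions

end InnerProductSpace

/-- **Existence of the constant `γ₀` of Definition 1 (isolation of the limit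
cycle).**  Let `x₀` be a periodic solution of the planar system `ẋ = ψ(x)` of
least period `T₀ > 0` with trajectory `x̃₀ = x₀ '' [0, T₀]`, and assume
condition (A₀): the linear system `ẏ = ψ'(x₀(t)) y` has no `2T₀`-periodic
solution linearly independent of `ẋ₀`.  Then there is `γ₀ > 0` such that
`ẋ = ψ(x)` has no `T₀`-periodic solution `x` whose initial value `ξ = x 0`
satisfies `0 < dist(ξ, x̃₀) < γ₀`. -/
theorem limit_cycle_isolated
    (ψ : EuclideanSpace ℝ (Fin 2) → EuclideanSpace ℝ (Fin 2))
    (hψ : ContDiff ℝ 2 ψ)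
    (T₀ : ℝ) (hT₀ : 0 < T₀)
    (x₀ : ℝ → EuclideanSpace ℝ (Fin 2))
    (hx₀sol : ∀ t : ℝ, HasDerivAt x₀ (ψ (x₀ t)) t)
    (hx₀per : Function.Periodic x₀ T₀)
    (hx₀least : ∀ p : ℝ, 0 < p → Function.Periodic x₀ p → T₀ ≤ p)
    (hA₀ : ∀ y : ℝ → EuclideanSpace ℝ (Fin 2),
      (∀ t : ℝ, HasDerivAt y (fderiv ℝ ψ (x₀ t) (y t)) t) →
      Function.Periodic y (2 * T₀) →
      ¬ LinearIndependent ℝ ![y, fun t => ψ (x₀ t)]) :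
    ∃ γ₀ > (0 : ℝ), ∀ x : ℝ → EuclideanSpace ℝ (Fin 2),
      (∀ t : ℝ, HasDerivAt x (ψ (x t)) t) →
      Function.Periodic x T₀ →
      ¬ (0 < Metric.infDist (x 0) (x₀ '' Set.Icc 0 T₀) ∧
          Metric.infDist (x 0) (x₀ '' Set.Icc 0 T₀) < γ₀) := by
  by_contra! hnear
  choose X hX hXper hpos hlt using fun n : ℕ => hnear (1 / (n + 1)) Nat.one_div_pos_of_nat
  obtain ⟨y, hy, hyper, s, hys, horth⟩ := exists_periodic_variational_solution hψ hT₀ hx₀sol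
    hx₀per hX hXper hpos
    (squeeze_zero (fun n => (hpos n).le) (fun n => (hlt n).le)
      tendsto_one_div_add_atTop_nhds_zero_nat)
  exact hA₀ y hy (by simpa using hyper.nat_mul 2) (linearIndependent_pair_of_inner_eq_zero s
    (ne_zero_of_hasDerivAt_of_forall_period_le hT₀ hx₀sol hx₀least) hys horth)
end

section
/- Let T > 0, ε > 0, λ ∈ [0, 1], and let z : [0, T] → ℝ² be continuous and satisfy z(t) = Ω(T, 0, z(T)) + ε ∫₀^{λt+(1−λ)T} Φ(τ, z(τ)) dτ for all t ∈ [0, T]. Let S ⊂ ℝ² be a convex set containing the range of z, and let M, M', L', L'' ≥ 0 be such that for all t ∈ [0, T] and all ξ, ξ' ∈ S: ‖Φ(t, ξ)‖ ≤ M, ‖Φ(t, ξ) − Φ(t, ξ')‖ ≤ M' ‖ξ − ξ'‖, ‖Ω'₍₃₎(T, 0, ξ)‖ ≤ L', and ‖Ω''₍₃₎₍₃₎(T, 0, ξ)‖ ≤ L''. If t₀ ∈ [0, T] satisfies z(t₀) = Ω(T, 0, z(t₀)), then, with α = λ t₀ + (1−λ) T, ‖η(T, α, z(t₀)) − η(0,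 α, z(t₀))‖ ≤ ε T² M (M' + √2 · M · L'' + M' · L'). (case-(15) estimate in the proof of Theorem 1) -/
/-!
Variation of constants gives `η(t, α, ξ) = D(t) ∫_α^t Φ(τ, ξ) dτ` with `D(t) = Ω'₍₃₎(t, 0, ξ)`,
so for `ξ = z(t₀)`, `η(T) - η(0) = D(T) ∫_α^T Φ(·, ξ) + ∫_0^α Φ(·, ξ)`. The integral equation for
`z`, taken at `t₀` and at `T`, gives `ε ∫_0^α Φ(·, z) = ξ - Ω(T, 0, z(T))` and
`ε ∫_α^T Φ(·, z) = z(T) - ξ`. Since `ξ` is a fixed point of `Ω(T, 0, ·)`, `ε (η(T) - η(0))` is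
then the sum of `ε ∫_0^α` and of `D(T) ε ∫_α^T` of `Φ(·, ξ) - Φ(·, z)`, which is at most
`M' ε M T` because `‖z(t) - ξ‖ ≤ ε M T`, and of minus the second-order Taylor remainder of
`Ω(T, 0, ·)` between `ξ` and `z(T)`, which is at most `L'' (ε M T)²`.

The facts about the flow behind the first step (the variational equation for `D` and continuity
of `D⁻¹`) come from differentiating `Ω(u, 0, ζ) = ζ + ∫_0^u ψ(Ω(s, 0, ζ)) ds` under the integral
sign; the domination needed there is a local Lipschitz bound on the flow, uniform on compact time
intervals, which Grönwall's inequality provides.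
-/

open Set Metric MeasureTheory Filter Topology intervalIntegral Function
open scoped Interval

variable {E : Type*} [NormedAddCommGroup E] [NormedSpace ℝ E]

theorem ODE_solution_unique_of_locally_lipschitzOnWith {v : ℝ → E → E}
    (hv : ∀ t₀ x, ∃ K, ∃ U ∈ 𝓝 x, ∀ᶠ t in 𝓝 t₀, LipschitzOnWith K (v t) U)
    {f g : ℝ → E} (hf : ∀ t, HasDerivAt f (v t (f t)) t) (hg : ∀ t, HasDerivAt g (v t (g t)) t)
    {t₁ : ℝ} (h : f t₁ = g t₁) : f = g := by
  have hfc : Continuous f := continuous_iff_continuousAt.2 fun t => (hf t).continuousAt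
  have hgc : Continuous g := continuous_iff_continuousAt.2 fun t => (hg t).continuousAt
  suffices {t | f t = g t} = univ from funext fun t => (this.symm ▸ mem_univ t :)
  refine IsClopen.eq_univ ⟨isClosed_eq hfc hgc, isOpen_iff_mem_nhds.2 fun t₂ ht₂ => ?_⟩ ⟨t₁, h⟩
  obtain ⟨K, U, hU, hlip⟩ := hv t₂ (f t₂)
  have hfU : ∀ᶠ t in 𝓝 t₂, f t ∈ U := hfc.continuousAt.preimage_mem_nhds hU
  have hgU : ∀ᶠ t in 𝓝 t₂, g t ∈ U := hgc.continuousAt.preimage_mem_nhds (ht₂ ▸ hU)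
  exact ODE_solution_unique_of_eventually hlip ((Eventually.of_forall hf).and hfU)
    ((Eventually.of_forall hg).and hgU) ht₂

theorem eq_zero_of_hasDerivAt_clm_apply {A : ℝ → E →L[ℝ] E} (hA : Continuous A) {w : ℝ → E}
    (hw : ∀ t, HasDerivAt w (A t (w t)) t) {t₀ : ℝ} (h₀ : w t₀ = 0) : w = 0 := by
  refine ODE_solution_unique_of_locally_lipschitzOnWith (fun t₁ _ => ?_) hw (fun t => by simp) h₀
  have hnear : ∀ᶠ t in 𝓝 t₁, ‖A t‖₊ < ‖A t₁‖₊ + 1 :=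
    hA.nnnorm.continuousAt.eventually_lt continuousAt_const (lt_add_one _)
  exact ⟨_, univ, univ_mem, hnear.mono fun t ht => ((A t).lipschitz.weaken ht.le).lipschitzOnWith⟩

theorem norm_intervalIntegral_le_of_mem_Icc {f : ℝ → E} {T C a b : ℝ}
    (hf : ∀ s ∈ Icc 0 T, ‖f s‖ ≤ C) (ha : a ∈ Icc 0 T) (hb : b ∈ Icc 0 T) :
    ‖∫ s in a..b, f s‖ ≤ C * T := by
  have hC : 0 ≤ C := (norm_nonneg _).trans (hf a ha)
  refine (norm_integral_le_of_norm_le_const fun s hs =>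
    hf s (uIcc_subset_Icc ha hb (uIoc_subset_uIcc hs))).trans (mul_le_mul_of_nonneg_left ?_ hC)
  exact abs_sub_le_iff.2 ⟨by linarith [ha.1, hb.2], by linarith [ha.2, hb.1]⟩

theorem mul_add_one_sub_mul_mem_Icc {lam t T : ℝ} (hlam : lam ∈ Icc (0 : ℝ) 1)
    (ht : t ∈ Icc 0 T) : lam * t + (1 - lam) * T ∈ Icc 0 T :=
  convex_Icc 0 T ht ⟨ht.1.trans ht.2, le_rfl⟩ hlam.1 (sub_nonneg.2 hlam.2) (add_sub_cancel _ _)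

theorem norm_sub_le_of_eq_add_smul_integral {z F : ℝ → E} {c : E} {T ε lam M : ℝ} (hε : 0 ≤ ε)
    (hlam : lam ∈ Icc (0 : ℝ) 1) (hF : ∀ s ∈ Icc 0 T, ‖F s‖ ≤ M)
    (hFint : IntervalIntegrable F volume 0 T)
    (hz : ∀ t ∈ Icc 0 T, z t = c + ε • ∫ τ in 0..(lam * t + (1 - lam) * T), F τ)
    {t s : ℝ} (ht : t ∈ Icc 0 T) (hs : s ∈ Icc 0 T) : ‖z t - z s‖ ≤ ε * (M * T) := by
  have hat := mul_add_one_sub_mul_mem_Icc hlam ht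
  have has := mul_add_one_sub_mul_mem_Icc hlam hs
  have h0 : (0 : ℝ) ∈ [[0, T]] := left_mem_uIcc
  rw [hz t ht, hz s hs, add_sub_add_left_eq_sub, ← smul_sub,
    integral_interval_sub_left (hFint.mono_set (uIcc_subset_uIcc h0 (Icc_subset_uIcc hat)))
      (hFint.mono_set (uIcc_subset_uIcc h0 (Icc_subset_uIcc has))),
    norm_smul, Real.norm_of_nonneg hε]
  exact mul_le_mul_of_nonneg_left (norm_intervalIntegral_le_of_mem_Icc hF has hat) hε

theorem Convex.norm_sub_sub_fderiv_le {F : Type*} [NormedAddCommGroup F] [NormedSpace ℝ F]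
    {f : E → F} {f' : E → E →L[ℝ] F} {f'' : E → E →L[ℝ] E →L[ℝ] F} {s : Set E} (hs : Convex ℝ s)
    (hf : ∀ x ∈ s, HasFDerivAt f (f' x) x) (hf' : ∀ x ∈ s, HasFDerivAt f' (f'' x) x) {C : ℝ}
    (hC : ∀ x ∈ s, ‖f'' x‖ ≤ C) {x y : E} (hx : x ∈ s) (hy : y ∈ s) :
    ‖f y - f x - f' x (y - x)‖ ≤ C * ‖y - x‖ ^ 2 := by
  have hseg : segment ℝ x y ⊆ s := hs.segment_subset hx hy
  have hC0 : 0 ≤ C := (norm_nonneg (f'' x)).trans (hC x hx)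
  have hnear : ∀ w ∈ segment ℝ x y, ‖w - x‖ ≤ ‖y - x‖ := fun w hw => by
    rw [← dist_eq_norm, ← dist_eq_norm, dist_comm w, dist_comm y]
    linarith [dist_add_dist_of_mem_segment hw, dist_nonneg (x := w) (y := y)]
  have hf'_le : ∀ w ∈ segment ℝ x y, ‖f' w - f' x‖ ≤ C * ‖y - x‖ := fun w hw =>
    (hs.norm_image_sub_le_of_norm_hasFDerivWithin_le (fun v hv => (hf' v hv).hasFDerivWithinAt) hC
      hx (hseg hw)).trans (mul_le_mul_of_nonneg_left (hnear w hw) hC0)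
  simpa [pow_two, mul_assoc] using
    (convex_segment x y).norm_image_sub_le_of_norm_hasFDerivWithin_le'
      (fun w hw => (hf w (hseg hw)).hasFDerivWithinAt) hf'_le (left_mem_segment ℝ x y)
      (right_mem_segment ℝ x y)

theorem smul_apply_integral_add_integral_eq {F G : ℝ → E} {f : E → E} (D : E →L[ℝ] E)
    {ε α T : ℝ} {ξ y : E} (hF : IntervalIntegrable F volume 0 T)
    (hG : IntervalIntegrable G volume 0 T) (hα : α ∈ Icc 0 T)
    (hξ : ξ = f y + ε • ∫ τ in 0..α, F τ) (hy : y = f y + ε • ∫ τ in 0..T, F τ)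
    (hfix : ξ = f ξ) :
    ε • (D (∫ τ in α..T, G τ) + ∫ τ in 0..α, G τ) =
      ε • (∫ τ in 0..α, (G τ - F τ)) + D (ε • ∫ τ in α..T, (G τ - F τ)) -
        (f y - f ξ - D (y - ξ)) := by
  have hsub : ∀ {a b}, a ∈ Icc 0 T → b ∈ Icc 0 T → [[a, b]] ⊆ [[0, T]] := fun ha hb =>
    uIcc_subset_uIcc (Icc_subset_uIcc ha) (Icc_subset_uIcc hb)
  have h0 : (0 : ℝ) ∈ Icc 0 T := ⟨le_rfl, hα.1.trans hα.2⟩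
  have hT : T ∈ Icc 0 T := ⟨hα.1.trans hα.2, le_rfl⟩
  rw [integral_sub (hG.mono_set (hsub h0 hα)) (hF.mono_set (hsub h0 hα)),
    integral_sub (hG.mono_set (hsub hα hT)) (hF.mono_set (hsub hα hT)),
    ← integral_interval_sub_left hF (hF.mono_set (hsub h0 hα))]
  have hDξ := congrArg D hξ
  have hDy := congrArg D hy
  simp only [map_sub, map_add, map_smul, smul_sub, smul_add] at hDξ hDy ⊢
  linear_combination (norm := module) hfix - hξ + hDξ - hDy

theorem norm_apply_integral_add_integral_le {F G : ℝ → E} {f : E → E} {D : E →L[ℝ] E}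
    {ε α T K L' R : ℝ} {ξ y : E} (hε : 0 ≤ ε) (hF : IntervalIntegrable F volume 0 T)
    (hG : IntervalIntegrable G volume 0 T) (hα : α ∈ Icc 0 T)
    (hξ : ξ = f y + ε • ∫ τ in 0..α, F τ) (hy : y = f y + ε • ∫ τ in 0..T, F τ)
    (hfix : ξ = f ξ) (hGF : ∀ s ∈ Icc 0 T, ‖G s - F s‖ ≤ K) (hD : ‖D‖ ≤ L')
    (hR : ‖f y - f ξ - D (y - ξ)‖ ≤ R) :
    ε * ‖D (∫ τ in α..T, G τ) + ∫ τ in 0..α, G τ‖ ≤ ε * (K * T) + L' * (ε * (K * T)) + R := by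
  have h0 : (0 : ℝ) ∈ Icc 0 T := ⟨le_rfl, hα.1.trans hα.2⟩
  have h1 : ‖ε • ∫ τ in 0..α, (G τ - F τ)‖ ≤ ε * (K * T) := by
    rw [norm_smul_of_nonneg hε]
    exact mul_le_mul_of_nonneg_left (norm_intervalIntegral_le_of_mem_Icc hGF h0 hα) hε
  have h2 : ‖ε • ∫ τ in α..T, (G τ - F τ)‖ ≤ ε * (K * T) := by
    rw [norm_smul_of_nonneg hε]
    exact mul_le_mul_of_nonneg_left
      (norm_intervalIntegral_le_of_mem_Icc hGF hα ⟨h0.2, le_rfl⟩) hε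
  have hD2 : ‖D (ε • ∫ τ in α..T, (G τ - F τ))‖ ≤ L' * (ε * (K * T)) :=
    (D.le_of_opNorm_le hD _).trans (mul_le_mul_of_nonneg_left h2 ((norm_nonneg D).trans hD))
  calc ε * ‖D (∫ τ in α..T, G τ) + ∫ τ in 0..α, G τ‖
      = ‖ε • (D (∫ τ in α..T, G τ) + ∫ τ in 0..α, G τ)‖ := by
        rw [norm_smul, Real.norm_of_nonneg hε]
    _ ≤ _ := by
      rw [smul_apply_integral_add_integral_eq D hF hG hα hξ hy hfix]
      exact norm_sub_le_of_le (norm_add_le_of_le h1 hD2) hR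

structure IsFlow (ψ : E → E) (Ω : ℝ → ℝ → E → E) : Prop where
  apply_self : ∀ t₀ ξ, Ω t₀ t₀ ξ = ξ
  hasDerivAt : ∀ t₀ ξ t, HasDerivAt (fun s => Ω s t₀ ξ) (ψ (Ω t t₀ ξ)) t

/-- The field `φ` pulled back to initial values along the flow `Ω`; this is `Φ` of the paper. -/
noncomputable def flowPullback (Ω : ℝ → ℝ → E → E) (φ : ℝ → E → E) (t : ℝ) (ξ : E) : E :=
  fderiv ℝ (Ω 0 t) (Ω t 0 ξ) (φ t (Ω t 0 ξ))

namespace IsFlow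

variable {ψ : E → E} {Ω : ℝ → ℝ → E → E}

theorem continuous (hΩ : IsFlow ψ Ω) (t₀ : ℝ) (ξ : E) : Continuous fun t => Ω t t₀ ξ :=
  continuous_iff_continuousAt.2 fun t => (hΩ.hasDerivAt t₀ ξ t).continuousAt

theorem neg (hΩ : IsFlow ψ Ω) : IsFlow (-ψ) fun t t₀ => Ω (-t) (-t₀) where
  apply_self t₀ ξ := hΩ.apply_self (-t₀) ξ
  hasDerivAt t₀ ξ t := by
    simpa [comp_def] using (hΩ.hasDerivAt (-t₀) ξ (-t)).scomp t (hasDerivAt_neg t)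

theorem dist_le_of_lipschitzOnWith (hΩ : IsFlow ψ Ω) {W : Set E} {L : NNReal}
    (hL : LipschitzOnWith L ψ W) {u : ℝ} {ζ ζ' : E} (hζ : ∀ s ∈ Ico 0 u, Ω s 0 ζ ∈ W)
    (hζ' : ∀ s ∈ Ico 0 u, Ω s 0 ζ' ∈ W) :
    ∀ t ∈ Icc 0 u, dist (Ω t 0 ζ) (Ω t 0 ζ') ≤ dist ζ ζ' * Real.exp (L * t) := by
  intro t ht
  simpa using dist_le_of_trajectories_ODE_of_mem (fun _ _ => hL)
    (hΩ.continuous 0 ζ).continuousOn (fun s _ => (hΩ.hasDerivAt 0 ζ s).hasDerivWithinAt) hζ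
    (hΩ.continuous 0 ζ').continuousOn (fun s _ => (hΩ.hasDerivAt 0 ζ' s).hasDerivWithinAt) hζ'
    (by rw [hΩ.apply_self, hΩ.apply_self]) t ht

/-- Grönwall's bound keeps a nearby trajectory inside the region where it applies: the first time
the distance to the reference trajectory reached `1` would contradict it. -/
theorem dist_lt_one_of_lipschitzOnWith (hΩ : IsFlow ψ Ω) {b : ℝ} {ξ ζ : E} {L : NNReal}
    (hL : LipschitzOnWith L ψ (cthickening 1 ((fun t => Ω t 0 ξ) '' Icc 0 b)))
    (hζ : dist ζ ξ * Real.exp (L * b) < 1) : ∀ t ∈ Icc 0 b, dist (Ω t 0 ζ) (Ω t 0 ξ) < 1 := by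
  by_contra! hbad
  have hcpt : IsCompact (Icc 0 b ∩ {t | 1 ≤ dist (Ω t 0 ζ) (Ω t 0 ξ)}) :=
    isCompact_Icc.inter_right
      (isClosed_le continuous_const ((hΩ.continuous 0 ζ).dist (hΩ.continuous 0 ξ)))
  obtain ⟨t, ⟨ht, hfar : 1 ≤ dist (Ω t 0 ζ) (Ω t 0 ξ)⟩, hleast⟩ :=
    hcpt.exists_isLeast (by simpa [Set.Nonempty] using hbad)
  have hnear : ∀ s ∈ Ico 0 t, dist (Ω s 0 ζ) (Ω s 0 ξ) < 1 := fun s hs =>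
    not_le.1 fun h => (hleast ⟨⟨hs.1, hs.2.le.trans ht.2⟩, h⟩).not_gt hs.2
  have hmem : ∀ s ∈ Ico 0 t, Ω s 0 ξ ∈ (fun t => Ω t 0 ξ) '' Icc 0 b := fun s hs =>
    mem_image_of_mem _ ⟨hs.1, hs.2.le.trans ht.2⟩
  have hgron := hΩ.dist_le_of_lipschitzOnWith hL
    (fun s hs => mem_cthickening_of_dist_le _ _ _ _ (hmem s hs) (hnear s hs).le)
    (fun s hs => self_subset_cthickening _ (hmem s hs)) t ⟨ht.1, le_rfl⟩
  have hexp : dist ζ ξ * Real.exp (L * t) ≤ dist ζ ξ * Real.exp (L * b) := by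
    gcongr
    exact ht.2
  linarith

section LocallyLipschitz

variable (hψ : LocallyLipschitz ψ) (hΩ : IsFlow ψ Ω)
include hψ hΩ

theorem eq_of_hasDerivAt {f : ℝ → E} (hf : ∀ t, HasDerivAt f (ψ (f t)) t) {t₀ : ℝ} {ξ : E}
    (h : f t₀ = ξ) : f = fun t => Ω t t₀ ξ := by
  refine ODE_solution_unique_of_locally_lipschitzOnWith (fun _ x => ?_) hf (hΩ.hasDerivAt t₀ ξ)
    (h.trans (hΩ.apply_self t₀ ξ).symm)
  obtain ⟨K, U, hU, hlip⟩ := hψ x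
  exact ⟨K, U, hU, Eventually.of_forall fun _ => hlip⟩

theorem apply_apply (t s t₀ : ℝ) (ξ : E) : Ω t s (Ω s t₀ ξ) = Ω t t₀ ξ :=
  (congrFun (hΩ.eq_of_hasDerivAt hψ (hΩ.hasDerivAt t₀ ξ) rfl) t).symm

theorem apply_eq_apply_sub (t t₀ : ℝ) (ξ : E) : Ω t t₀ ξ = Ω (t - t₀) 0 ξ := by
  refine (congrFun (hΩ.eq_of_hasDerivAt hψ (f := fun t => Ω (t - t₀) 0 ξ) (fun t => ?_)
    (by simp [hΩ.apply_self])) t).symm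
  simpa [comp_def] using (hΩ.hasDerivAt 0 ξ (t - t₀)).scomp t ((hasDerivAt_id t).sub_const t₀)

theorem exists_lipschitzOnWith_forward [ProperSpace E] (ξ : E) (b : ℝ) :
    ∃ δ > 0, ∃ K, ∀ t ∈ Icc 0 b, LipschitzOnWith K (Ω t 0) (ball ξ δ) := by
  set W := cthickening 1 ((fun t => Ω t 0 ξ) '' Icc 0 b)
  obtain ⟨L, hL⟩ := hψ.locallyLipschitzOn.exists_lipschitzOnWith_of_compact
    (isCompact_Icc.image (hΩ.continuous 0 ξ)).cthickening
  have hstay : ∀ ζ ∈ ball ξ (Real.exp (L * b))⁻¹, ∀ s ∈ Icc 0 b, Ω s 0 ζ ∈ W := by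
    intro ζ hζ s hs
    have hζ' : dist ζ ξ * Real.exp (L * b) < 1 := by
      rwa [← lt_div_iff₀ (Real.exp_pos _), one_div]
    exact mem_cthickening_of_dist_le _ _ _ _ (mem_image_of_mem _ hs)
      (hΩ.dist_lt_one_of_lipschitzOnWith hL hζ' s hs).le
  refine ⟨(Real.exp (L * b))⁻¹, inv_pos.2 (Real.exp_pos _), (Real.exp (L * b)).toNNReal,
    fun t ht => LipschitzOnWith.of_dist_le' fun ζ hζ ζ' hζ' => ?_⟩
  calc dist (Ω t 0 ζ) (Ω t 0 ζ') ≤ dist ζ ζ' * Real.exp (L * t) :=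
        hΩ.dist_le_of_lipschitzOnWith hL (fun s hs => hstay ζ hζ s ⟨hs.1, hs.2.le.trans ht.2⟩)
          (fun s hs => hstay ζ' hζ' s ⟨hs.1, hs.2.le.trans ht.2⟩) t ⟨ht.1, le_rfl⟩
    _ ≤ Real.exp (L * b) * dist ζ ζ' := by
        rw [mul_comm]
        gcongr
        exact ht.2

theorem exists_lipschitzOnWith [ProperSpace E] (ξ : E) (b : ℝ) :
    ∃ δ > 0, ∃ K, ∀ t ∈ Icc (-b) b, LipschitzOnWith K (Ω t 0) (ball ξ δ) := by
  obtain ⟨δ₁, hδ₁, K₁, hK₁⟩ := hΩ.exists_lipschitzOnWith_forward hψ ξ b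
  obtain ⟨δ₂, hδ₂, K₂, hK₂⟩ := hΩ.neg.exists_lipschitzOnWith_forward hψ.neg ξ b
  refine ⟨min δ₁ δ₂, lt_min hδ₁ hδ₂, max K₁ K₂, fun t ht => ?_⟩
  rcases le_total 0 t with h | h
  · exact ((hK₁ t ⟨h, ht.2⟩).weaken (le_max_left _ _)).mono (ball_subset_ball (min_le_left _ _))
  · have := (hK₂ (-t) ⟨neg_nonneg.2 h, neg_le.1 ht.1⟩).weaken (le_max_right K₁ K₂)
    simp only [neg_neg, neg_zero] at this
    exact this.mono (ball_subset_ball (min_le_right _ _))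

theorem continuous_uncurry_zero [ProperSpace E] :
    Continuous fun p : ℝ × E => Ω p.1 0 p.2 := by
  refine continuous_iff_continuousAt.2 fun ⟨t, ξ⟩ => ?_
  obtain ⟨δ, hδ, K, hK⟩ := hΩ.exists_lipschitzOnWith hψ ξ (|t| + 1)
  have hcont : ContinuousOn (fun p : ℝ × E => Ω p.1 0 p.2)
      (Ioo (-(|t| + 1)) (|t| + 1) ×ˢ ball ξ δ) :=
    continuousOn_prod_of_continuousOn_lipschitzOnWith' _ K
      (fun s hs => hK s (Ioo_subset_Icc_self hs)) fun ζ _ => (hΩ.continuous 0 ζ).continuousOn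
  refine hcont.continuousAt (prod_mem_nhds (Ioo_mem_nhds ?_ ?_) (ball_mem_nhds ξ hδ)) <;>
    cases abs_cases t <;> linarith

theorem continuous_uncurry [ProperSpace E] :
    Continuous fun p : ℝ × ℝ × E => Ω p.1 p.2.1 p.2.2 := by
  have : (fun p : ℝ × ℝ × E => Ω p.1 p.2.1 p.2.2) = fun p => Ω (p.1 - p.2.1) 0 p.2.2 :=
    funext fun p => hΩ.apply_eq_apply_sub hψ _ _ _
  rw [this]
  exact (hΩ.continuous_uncurry_zero hψ).comp
    ((continuous_fst.sub continuous_snd.fst).prodMk continuous_snd.snd)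

variable [FiniteDimensional ℝ E] [MeasurableSpace E] [BorelSpace E]

theorem measurable_fderiv_uncurry :
    Measurable fun p : (ℝ × ℝ) × E => fderiv ℝ (Ω p.1.1 p.1.2) p.2 :=
  measurable_fderiv_with_param ℝ (f := fun q : ℝ × ℝ => Ω q.1 q.2) <|
    (hΩ.continuous_uncurry hψ).comp
      (continuous_fst.fst.prodMk (continuous_fst.snd.prodMk continuous_snd))

variable {φ : ℝ → E → E} (hφ : Continuous (uncurry φ))
include hφ

theorem measurable_flowPullback : Measurable (uncurry (flowPullback Ω φ)) := by
  have hΩ0 : Continuous fun p : ℝ × E => Ω p.1 0 p.2 := hΩ.continuous_uncurry_zero hψ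
  exact (continuous_fst.clm_apply continuous_snd).measurable2
    ((hΩ.measurable_fderiv_uncurry hψ).comp
      ((measurable_const.prodMk measurable_fst).prodMk hΩ0.measurable))
    (hφ.comp (continuous_fst.prodMk hΩ0)).measurable

theorem intervalIntegrable_flowPullback_comp {z : ℝ → E} {a b M : ℝ} (hab : a ≤ b)
    (hz : ContinuousOn z (Icc a b)) (hM : ∀ s ∈ Icc a b, ‖flowPullback Ω φ s (z s)‖ ≤ M) :
    IntervalIntegrable (fun s => flowPullback Ω φ s (z s)) volume a b := by
  have hmeas : AEStronglyMeasurable (fun s => flowPullback Ω φ s (z s))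
      (volume.restrict (Icc a b)) :=
    ((hΩ.measurable_flowPullback hψ hφ).comp_aemeasurable
      (aemeasurable_id.prodMk (hz.aemeasurable measurableSet_Icc))).aestronglyMeasurable
  refine intervalIntegrable_const.mono_fun' ?_ ((ae_restrict_iff' measurableSet_uIoc).2
    (ae_of_all _ fun s hs => hM s (Ioc_subset_Icc_self (uIoc_of_le hab ▸ hs))))
  rw [uIoc_of_le hab]
  exact hmeas.mono_measure (Measure.restrict_mono Ioc_subset_Icc_self le_rfl)

end LocallyLipschitz

section ContDiff

variable [FiniteDimensional ℝ E] (hψ : ContDiff ℝ 1 ψ) (hΩ : IsFlow ψ Ω)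
include hψ hΩ

theorem stronglyMeasurable_fderiv_comp_fderiv (ζ : E) :
    StronglyMeasurable fun s => fderiv ℝ ψ (Ω s 0 ζ) ∘L fderiv ℝ (Ω s 0) ζ := by
  borelize E
  have hD : Measurable fun s => fderiv ℝ (Ω s 0) ζ :=
    (hΩ.measurable_fderiv_uncurry hψ.locallyLipschitz).comp
      ((measurable_id.prodMk measurable_const).prodMk measurable_const)
  exact ((hψ.continuous_fderiv one_ne_zero).comp (hΩ.continuous 0 ζ)).stronglyMeasurable.mul
    hD.stronglyMeasurable

theorem exists_norm_fderiv_comp_fderiv_le (ξ : E) (a c : ℝ) :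
    ∃ δ > 0, ∃ C, ∀ s ∈ [[a, c]], ∀ ζ ∈ ball ξ δ,
      ‖fderiv ℝ ψ (Ω s 0 ζ) ∘L fderiv ℝ (Ω s 0) ζ‖ ≤ C := by
  set b := |a| + |c|
  have hab : [[a, c]] ⊆ Icc (-b) b := uIcc_subset_Icc
    ⟨by linarith [neg_abs_le a, abs_nonneg c], by linarith [le_abs_self a, abs_nonneg c]⟩
    ⟨by linarith [neg_abs_le c, abs_nonneg a], by linarith [le_abs_self c, abs_nonneg a]⟩
  obtain ⟨δ, hδ, K, hK⟩ := hΩ.exists_lipschitzOnWith hψ.locallyLipschitz ξ b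
  obtain ⟨C, hC⟩ := (isCompact_Icc.prod (isCompact_closedBall ξ δ)).exists_bound_of_continuousOn
    ((hψ.continuous_fderiv one_ne_zero).comp
      (hΩ.continuous_uncurry_zero hψ.locallyLipschitz)).continuousOn
  refine ⟨δ, hδ, C * K, fun s hs ζ hζ => ?_⟩
  have hCs := hC (s, ζ) ⟨hab hs, ball_subset_closedBall hζ⟩
  exact (ContinuousLinearMap.opNorm_comp_le _ _).trans (mul_le_mul hCs
    (norm_fderiv_le_of_lipschitzOn ℝ (isOpen_ball.mem_nhds hζ) (hK s (hab hs))) (norm_nonneg _)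
    ((norm_nonneg _).trans hCs))

variable (hd : ∀ t t₀, Differentiable ℝ (Ω t t₀))
include hd

theorem fderiv_eq_id_add_integral (ξ : E) (u : ℝ) :
    fderiv ℝ (Ω u 0) ξ = ContinuousLinearMap.id ℝ E +
      ∫ s in (0 : ℝ)..u, fderiv ℝ ψ (Ω s 0 ξ) ∘L fderiv ℝ (Ω s 0) ξ := by
  obtain ⟨δ, hδ, C, hC⟩ := hΩ.exists_norm_fderiv_comp_fderiv_le hψ ξ 0 u
  have hcont : ∀ ζ, Continuous fun s => ψ (Ω s 0 ζ) := fun ζ =>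
    hψ.continuous.comp (hΩ.continuous 0 ζ)
  have hderiv := hasFDerivAt_integral_of_dominated_of_fderiv_le (μ := volume) (a := 0) (b := u)
    (F := fun ζ s => ψ (Ω s 0 ζ)) (bound := fun _ => C) (ball_mem_nhds ξ hδ)
    (Eventually.of_forall fun ζ => (hcont ζ).aestronglyMeasurable)
    ((hcont ξ).intervalIntegrable 0 u)
    (hΩ.stronglyMeasurable_fderiv_comp_fderiv hψ ξ).aestronglyMeasurable
    (ae_of_all _ fun s hs ζ hζ => hC s (uIoc_subset_uIcc hs) ζ hζ) intervalIntegrable_const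
    (ae_of_all _ fun s _ ζ _ =>
      (hψ.differentiable one_ne_zero _).hasFDerivAt.comp ζ (hd s 0 ζ).hasFDerivAt)
  have hFTC : (fun ζ => ∫ s in (0 : ℝ)..u, ψ (Ω s 0 ζ)) = fun ζ => Ω u 0 ζ - ζ :=
    funext fun ζ => by
      rw [integral_eq_sub_of_hasDerivAt (fun s _ => hΩ.hasDerivAt 0 ζ s)
        ((hcont ζ).intervalIntegrable 0 u), hΩ.apply_self]
  rw [hFTC] at hderiv
  rw [← ((hd u 0 ξ).hasFDerivAt.sub (hasFDerivAt_id ξ)).unique hderiv]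
  abel

theorem hasDerivAt_fderiv (ξ : E) (t : ℝ) :
    HasDerivAt (fun s => fderiv ℝ (Ω s 0) ξ) (fderiv ℝ ψ (Ω t 0 ξ) ∘L fderiv ℝ (Ω t 0) ξ) t := by
  set B := fun s => fderiv ℝ ψ (Ω s 0 ξ) ∘L fderiv ℝ (Ω s 0) ξ
  have hBint : ∀ a c, IntervalIntegrable B volume a c := fun a c => by
    obtain ⟨δ, hδ, C, hC⟩ := hΩ.exists_norm_fderiv_comp_fderiv_le hψ ξ a c
    exact intervalIntegrable_const.mono_fun'
      (hΩ.stronglyMeasurable_fderiv_comp_fderiv hψ ξ).aestronglyMeasurable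
      ((ae_restrict_iff' measurableSet_uIoc).2 (ae_of_all _ fun s hs =>
        hC s (uIoc_subset_uIcc hs) ξ (mem_ball_self hδ)))
  have hfderiv : (fun s => fderiv ℝ (Ω s 0) ξ) =
      fun s => ContinuousLinearMap.id ℝ E + ∫ r in (0 : ℝ)..s, B r :=
    funext (hΩ.fderiv_eq_id_add_integral hψ hd ξ)
  have hBcont : Continuous B := ((hψ.continuous_fderiv one_ne_zero).comp (hΩ.continuous 0 ξ)).mul
    (hfderiv ▸ continuous_const.add (continuous_primitive hBint 0))
  rw [hfderiv]
  exact (integral_hasDerivAt_right (hBint 0 t) (hBcont.stronglyMeasurableAtFilter _ _)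
    hBcont.continuousAt).const_add _

omit [FiniteDimensional ℝ E] in
theorem fderiv_zero_comp_fderiv (t : ℝ) (ξ : E) :
    fderiv ℝ (Ω 0 t) (Ω t 0 ξ) ∘L fderiv ℝ (Ω t 0) ξ = ContinuousLinearMap.id ℝ E := by
  have : Ω 0 t ∘ Ω t 0 = id := funext fun ζ => by
    simp [hΩ.apply_apply hψ.locallyLipschitz, hΩ.apply_self]
  rw [← fderiv_comp ξ (hd 0 t _) (hd t 0 ξ), this, fderiv_id]

omit [FiniteDimensional ℝ E] in
theorem fderiv_comp_fderiv_zero (t : ℝ) (ξ : E) :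
    fderiv ℝ (Ω t 0) ξ ∘L fderiv ℝ (Ω 0 t) (Ω t 0 ξ) = ContinuousLinearMap.id ℝ E := by
  have : Ω t 0 ∘ Ω 0 t = id := funext fun ζ => by
    simp [hΩ.apply_apply hψ.locallyLipschitz, hΩ.apply_self]
  have hξ : Ω 0 t (Ω t 0 ξ) = ξ := by rw [hΩ.apply_apply hψ.locallyLipschitz, hΩ.apply_self]
  have hcomp := fderiv_comp (Ω t 0 ξ) (hd t 0 (Ω 0 t (Ω t 0 ξ))) (hd 0 t (Ω t 0 ξ))
  rw [this, fderiv_id, hξ] at hcomp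
  exact hcomp.symm

theorem continuous_fderiv_zero_apply (ξ : E) :
    Continuous fun t => fderiv ℝ (Ω 0 t) (Ω t 0 ξ) := by
  let U : ℝ → (E →L[ℝ] E)ˣ := fun t => ⟨_, _, hΩ.fderiv_comp_fderiv_zero hψ hd t ξ,
    hΩ.fderiv_zero_comp_fderiv hψ hd t ξ⟩
  have : (fun t => fderiv ℝ (Ω 0 t) (Ω t 0 ξ)) = fun t => Ring.inverse (fderiv ℝ (Ω t 0) ξ) :=
    funext fun t => (Ring.inverse_unit (U t)).symm
  rw [this, continuous_iff_continuousAt]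
  exact fun t => (NormedRing.inverse_continuousAt (U t)).comp (f := fun s => fderiv ℝ (Ω s 0) ξ)
    (hΩ.hasDerivAt_fderiv hψ hd ξ t).continuousAt

/-- Variation of constants for the variational equation along `Ω · 0 ξ`, forced by `φ`. -/
theorem eq_fderiv_apply_integral_flowPullback {φ : ℝ → E → E} (hφ : Continuous (uncurry φ))
    {ξ : E} {h : ℝ → E} {α : ℝ} (hα : h α = 0)
    (hh : ∀ t, HasDerivAt h (fderiv ℝ ψ (Ω t 0 ξ) (h t) + φ t (Ω t 0 ξ)) t) (t : ℝ) :
    h t = fderiv ℝ (Ω t 0) ξ (∫ τ in α..t, flowPullback Ω φ τ ξ) := by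
  set G := fun τ => flowPullback Ω φ τ ξ
  have hG : Continuous G := (hΩ.continuous_fderiv_zero_apply hψ hd ξ).clm_apply
    (hφ.comp (continuous_id.prodMk (hΩ.continuous 0 ξ)))
  have hy : ∀ t, HasDerivAt (fun t => fderiv ℝ (Ω t 0) ξ (∫ τ in α..t, G τ))
      (fderiv ℝ ψ (Ω t 0 ξ) (fderiv ℝ (Ω t 0) ξ (∫ τ in α..t, G τ)) + φ t (Ω t 0 ξ)) t :=
    fun t => by
      refine ((hΩ.hasDerivAt_fderiv hψ hd ξ t).clm_apply (integral_hasDerivAt_right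
        (hG.intervalIntegrable α t) (hG.stronglyMeasurableAtFilter _ _)
        hG.continuousAt)).congr_deriv ?_
      simp only [G, flowPullback, ContinuousLinearMap.comp_apply]
      rw [← ContinuousLinearMap.comp_apply (fderiv ℝ (Ω t 0) ξ),
        hΩ.fderiv_comp_fderiv_zero hψ hd, ContinuousLinearMap.id_apply]
  have hA : Continuous fun t => fderiv ℝ ψ (Ω t 0 ξ) :=
    (hψ.continuous_fderiv one_ne_zero).comp (hΩ.continuous 0 ξ)
  have := eq_zero_of_hasDerivAt_clm_apply hA
    (fun t => ((hh t).sub (hy t)).congr_deriv (by simp)) (t₀ := α) (by simp [hα])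
  exact sub_eq_zero.1 (congrFun this t)

theorem sub_eq_fderiv_apply_integral_add_integral {φ : ℝ → E → E} (hφ : Continuous (uncurry φ))
    {ξ : E} {h : ℝ → E} {α : ℝ} (hα : h α = 0)
    (hh : ∀ t, HasDerivAt h (fderiv ℝ ψ (Ω t 0 ξ) (h t) + φ t (Ω t 0 ξ)) t) (T : ℝ) :
    h T - h 0 = fderiv ℝ (Ω T 0) ξ (∫ τ in α..T, flowPullback Ω φ τ ξ) +
      ∫ τ in 0..α, flowPullback Ω φ τ ξ := by
  rw [hΩ.eq_fderiv_apply_integral_flowPullback hψ hd hφ hα hh T,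
    hΩ.eq_fderiv_apply_integral_flowPullback hψ hd hφ hα hh 0,
    show Ω 0 0 = id from funext (hΩ.apply_self 0), fderiv_id, ContinuousLinearMap.id_apply,
    integral_symm α 0, sub_eq_add_neg]

end ContDiff

end IsFlow

theorem eta_difference_estimate_at_fixed_point_general
    (ψ : EuclideanSpace ℝ (Fin 2) → EuclideanSpace ℝ (Fin 2))
    (hψ : ContDiff ℝ 2 ψ)
    (Ω : ℝ → ℝ → EuclideanSpace ℝ (Fin 2) → EuclideanSpace ℝ (Fin 2))
    (hΩinit : ∀ t₀ ξ, Ω t₀ t₀ ξ = ξ)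
    (hΩsol : ∀ t₀ ξ t, HasDerivAt (fun s => Ω s t₀ ξ) (ψ (Ω t t₀ ξ)) t)
    (DΩ : ℝ → ℝ → EuclideanSpace ℝ (Fin 2) →
      (EuclideanSpace ℝ (Fin 2) →L[ℝ] EuclideanSpace ℝ (Fin 2)))
    (hDΩ : ∀ t t₀ ξ, HasFDerivAt (Ω t t₀) (DΩ t t₀ ξ) ξ)
    (D2Ω : ℝ → ℝ → EuclideanSpace ℝ (Fin 2) →
      (EuclideanSpace ℝ (Fin 2) →L[ℝ]
        EuclideanSpace ℝ (Fin 2) →L[ℝ] EuclideanSpace ℝ (Fin 2)))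
    (hD2Ω : ∀ t t₀ ξ, HasFDerivAt (fun ζ => DΩ t t₀ ζ) (D2Ω t t₀ ξ) ξ)
    (φ : ℝ → EuclideanSpace ℝ (Fin 2) → EuclideanSpace ℝ (Fin 2))
    (hφcont : Continuous fun p : ℝ × EuclideanSpace ℝ (Fin 2) => φ p.1 p.2)
    (Φ : ℝ → EuclideanSpace ℝ (Fin 2) → EuclideanSpace ℝ (Fin 2))
    (hΦ : ∀ t ξ, Φ t ξ = DΩ 0 t (Ω t 0 ξ) (φ t (Ω t 0 ξ)))
    (η : ℝ → ℝ → EuclideanSpace ℝ (Fin 2) → EuclideanSpace ℝ (Fin 2))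
    (hηinit : ∀ s ξ, η s s ξ = 0)
    (hηsol : ∀ s ξ t, HasDerivAt (fun u => η u s ξ)
      (fderiv ℝ ψ (Ω t 0 ξ) (η t s ξ) + φ t (Ω t 0 ξ)) t)
    (T ε lam : ℝ) (hT : 0 < T) (hε : 0 < ε) (hlam : lam ∈ Set.Icc (0:ℝ) 1)
    (z : ℝ → EuclideanSpace ℝ (Fin 2))
    (hzcont : ContinuousOn z (Set.Icc 0 T))
    (hz : ∀ t ∈ Set.Icc 0 T,
      z t = Ω T 0 (z T) + ε • ∫ τ in (0:ℝ)..(lam * t + (1 - lam) * T), Φ τ (z τ))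
    (S : Set (EuclideanSpace ℝ (Fin 2))) (hS : Convex ℝ S)
    (hrange : ∀ t ∈ Set.Icc 0 T, z t ∈ S)
    (M M' L' L'' : ℝ) (hM : 0 ≤ M) (hM' : 0 ≤ M') (hL'' : 0 ≤ L'')
    (hMbound : ∀ t ∈ Set.Icc 0 T, ∀ ξ ∈ S, ‖Φ t ξ‖ ≤ M)
    (hM'bound : ∀ t ∈ Set.Icc 0 T, ∀ ξ ∈ S, ∀ ξ' ∈ S,
      ‖Φ t ξ - Φ t ξ'‖ ≤ M' * ‖ξ - ξ'‖)
    (hL'bound : ∀ ξ ∈ S, ‖DΩ T 0 ξ‖ ≤ L')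
    (hL''bound : ∀ ξ ∈ S, ‖D2Ω T 0 ξ‖ ≤ L'')
    (t₀ : ℝ) (ht₀ : t₀ ∈ Set.Icc 0 T)
    (hfix : z t₀ = Ω T 0 (z t₀)) :
    ‖η T (lam * t₀ + (1 - lam) * T) (z t₀) -
        η 0 (lam * t₀ + (1 - lam) * T) (z t₀)‖ ≤
      ε * T ^ 2 * M * (M' + Real.sqrt 2 * M * L'' + M' * L') := by
  obtain rfl : DΩ = fun t t₀ ξ => fderiv ℝ (Ω t t₀) ξ :=
    funext fun t => funext fun t₀ => funext fun ξ => (hDΩ t t₀ ξ).fderiv.symm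
  obtain rfl : Φ = flowPullback Ω φ := funext fun t => funext fun ξ => hΦ t ξ
  have hΩ : IsFlow ψ Ω := ⟨hΩinit, hΩsol⟩
  have hψ1 : ContDiff ℝ 1 ψ := hψ.of_le (by norm_num)
  set ξ := z t₀
  have hξS : ξ ∈ S := hrange t₀ ht₀
  have hTT : T ∈ Icc 0 T := ⟨hT.le, le_rfl⟩
  have hint : ∀ {w : ℝ → EuclideanSpace ℝ (Fin 2)}, ContinuousOn w (Icc 0 T) →
      (∀ s ∈ Icc 0 T, w s ∈ S) →
      IntervalIntegrable (fun s => flowPullback Ω φ s (w s)) volume 0 T := fun hw hwS =>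
    hΩ.intervalIntegrable_flowPullback_comp hψ1.locallyLipschitz hφcont hT.le hw
      fun s hs => hMbound s hs _ (hwS s hs)
  have hnear : ∀ t ∈ Icc 0 T, ‖z t - ξ‖ ≤ ε * (M * T) := fun t ht =>
    norm_sub_le_of_eq_add_smul_integral hε.le hlam (fun s hs => hMbound s hs _ (hrange s hs))
      (hint hzcont hrange) hz ht ht₀
  have hGF : ∀ s ∈ Icc 0 T, ‖flowPullback Ω φ s ξ - flowPullback Ω φ s (z s)‖ ≤
      M' * (ε * (M * T)) := fun s hs =>
    (hM'bound s hs ξ hξS (z s) (hrange s hs)).trans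
      (mul_le_mul_of_nonneg_left (norm_sub_rev (z s) ξ ▸ hnear s hs) hM')
  have hTaylor : ‖Ω T 0 (z T) - Ω T 0 ξ - fderiv ℝ (Ω T 0) ξ (z T - ξ)‖ ≤
      L'' * (ε * (M * T)) ^ 2 :=
    (hS.norm_sub_sub_fderiv_le (fun x _ => hDΩ T 0 x) (fun x _ => hD2Ω T 0 x) hL''bound hξS
      (hrange T hTT)).trans (by gcongr; exact hnear T hTT)
  have hmain := norm_apply_integral_add_integral_le hε.le (hint hzcont hrange)
    (hint continuousOn_const fun _ _ => hξS) (mul_add_one_sub_mul_mem_Icc hlam ht₀) (hz t₀ ht₀)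
    (by convert hz T hTT using 4; ring) hfix hGF (hL'bound ξ hξS) hTaylor
  rw [← hΩ.sub_eq_fderiv_apply_integral_add_integral hψ1
    (fun t t₀ ξ => (hDΩ t t₀ ξ).differentiableAt) hφcont (hηinit _ ξ) (hηsol _ ξ)] at hmain
  refine (le_of_mul_le_mul_left (hmain.trans_eq (by ring) :
    ε * _ ≤ ε * (ε * T ^ 2 * M * (M' + M * L'' + M' * L'))) hε).trans
    (mul_le_mul_of_nonneg_left ?_ (by positivity))
  nlinarith [mul_nonneg hM hL'', Real.one_le_sqrt.2 (one_le_two (α := ℝ))]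

/-- **Case-(15) estimate in the proof of Theorem 1.**  Let `Ω (·, t₀, ξ)` be the
flow of the planar system `ẋ = ψ(x)`, with first and second derivatives
`DΩ = Ω'₍₃₎` and `D2Ω = Ω''₍₃₎₍₃₎` with respect to the initial value, let `φ` be
continuous, `Φ(t,ξ) = Ω'₍₃₎(0,t,Ω(t,0,ξ)) φ(t, Ω(t,0,ξ))`, and let
`η(·,s,ξ)` solve `ẏ = ψ'(Ω(t,0,ξ)) y + φ(t, Ω(t,0,ξ))`, `y(s) = 0`.
Suppose `z : [0,T] → ℝ²` is continuous and satisfies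
`z(t) = Ω(T,0,z(T)) + ε ∫₀^{λ t + (1−λ) T} Φ(τ, z(τ)) dτ` on `[0,T]`, its range
lies in a convex set `S` on which `‖Φ‖ ≤ M`, `Φ` is `M'`-Lipschitz,
`‖Ω'₍₃₎(T,0,·)‖ ≤ L'` and `‖Ω''₍₃₎₍₃₎(T,0,·)‖ ≤ L''`.  If `t₀ ∈ [0,T]` is such
that `z(t₀) = Ω(T,0,z(t₀))`, then with `α = λ t₀ + (1−λ) T`,
`‖η(T,α,z(t₀)) − η(0,α,z(t₀))‖ ≤ ε T² M (M' + √2 M L'' + M' L')`. -/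
theorem eta_difference_estimate_at_fixed_point
    (ψ : EuclideanSpace ℝ (Fin 2) → EuclideanSpace ℝ (Fin 2))
    (hψ : ContDiff ℝ 2 ψ)
    (Ω : ℝ → ℝ → EuclideanSpace ℝ (Fin 2) → EuclideanSpace ℝ (Fin 2))
    (hΩinit : ∀ t₀ ξ, Ω t₀ t₀ ξ = ξ)
    (hΩsol : ∀ t₀ ξ t, HasDerivAt (fun s => Ω s t₀ ξ) (ψ (Ω t t₀ ξ)) t)
    (DΩ : ℝ → ℝ → EuclideanSpace ℝ (Fin 2) →
      (EuclideanSpace ℝ (Fin 2) →L[ℝ] EuclideanSpace ℝ (Fin 2)))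
    (hDΩ : ∀ t t₀ ξ, HasFDerivAt (Ω t t₀) (DΩ t t₀ ξ) ξ)
    (D2Ω : ℝ → ℝ → EuclideanSpace ℝ (Fin 2) →
      (EuclideanSpace ℝ (Fin 2) →L[ℝ]
        EuclideanSpace ℝ (Fin 2) →L[ℝ] EuclideanSpace ℝ (Fin 2)))
    (hD2Ω : ∀ t t₀ ξ, HasFDerivAt (fun ζ => DΩ t t₀ ζ) (D2Ω t t₀ ξ) ξ)
    (φ : ℝ → EuclideanSpace ℝ (Fin 2) → EuclideanSpace ℝ (Fin 2))
    (hφcont : Continuous fun p : ℝ × EuclideanSpace ℝ (Fin 2) => φ p.1 p.2)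
    (Φ : ℝ → EuclideanSpace ℝ (Fin 2) → EuclideanSpace ℝ (Fin 2))
    (hΦ : ∀ t ξ, Φ t ξ = DΩ 0 t (Ω t 0 ξ) (φ t (Ω t 0 ξ)))
    (η : ℝ → ℝ → EuclideanSpace ℝ (Fin 2) → EuclideanSpace ℝ (Fin 2))
    (hηinit : ∀ s ξ, η s s ξ = 0)
    (hηsol : ∀ s ξ t, HasDerivAt (fun u => η u s ξ)
      (fderiv ℝ ψ (Ω t 0 ξ) (η t s ξ) + φ t (Ω t 0 ξ)) t)
    (T ε lam : ℝ) (hT : 0 < T) (hε : 0 < ε) (hlam : lam ∈ Set.Icc (0:ℝ) 1)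
    (z : ℝ → EuclideanSpace ℝ (Fin 2))
    (hzcont : ContinuousOn z (Set.Icc 0 T))
    (hz : ∀ t ∈ Set.Icc 0 T,
      z t = Ω T 0 (z T) + ε • ∫ τ in (0:ℝ)..(lam * t + (1 - lam) * T), Φ τ (z τ))
    (S : Set (EuclideanSpace ℝ (Fin 2))) (hS : Convex ℝ S)
    (hrange : ∀ t ∈ Set.Icc 0 T, z t ∈ S)
    (M M' L' L'' : ℝ) (hM : 0 ≤ M) (hM' : 0 ≤ M') (hL' : 0 ≤ L') (hL'' : 0 ≤ L'')
    (hMbound : ∀ t ∈ Set.Icc 0 T, ∀ ξ ∈ S, ‖Φ t ξ‖ ≤ M)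
    (hM'bound : ∀ t ∈ Set.Icc 0 T, ∀ ξ ∈ S, ∀ ξ' ∈ S,
      ‖Φ t ξ - Φ t ξ'‖ ≤ M' * ‖ξ - ξ'‖)
    (hL'bound : ∀ ξ ∈ S, ‖DΩ T 0 ξ‖ ≤ L')
    (hL''bound : ∀ ξ ∈ S, ‖D2Ω T 0 ξ‖ ≤ L'')
    (t₀ : ℝ) (ht₀ : t₀ ∈ Set.Icc 0 T)
    (hfix : z t₀ = Ω T 0 (z t₀)) :
    ‖η T (lam * t₀ + (1 - lam) * T) (z t₀) -
        η 0 (lam * t₀ + (1 - lam) * T) (z t₀)‖ ≤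
      ε * T ^ 2 * M * (M' + Real.sqrt 2 * M * L'' + M' * L') :=
  eta_difference_estimate_at_fixed_point_general ψ hψ Ω hΩinit hΩsol DΩ hDΩ D2Ω hD2Ω φ hφcont Φ hΦ η
    hηinit hηsol T ε lam hT hε hlam z hzcont hz S hS hrange M M' L' L'' hM hM' hL'' hMbound hM'bound
    hL'bound hL''bound t₀ ht₀ hfix
end
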